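/- Let n ≥ 3 be odd, r a positive integer with (2n−2)/r odd, and write n−1 = rs/2 with s odd. Then in 𝔽₂[x], the polynomials q₁(x) = (x^{r/2} − 1)/(x+1) and q₂(x) = (x^{n−1} − 1)/(x^{r/2} − 1) are relatively prime. -/

import Mathlib

open Polynomial Finset

/-!
Write `r = 2m`, so that `n - 1 = ms`. Then `q₂ = 1 + x^m + ⋯ + x^{(s-1)m}`, which is congruent to
`s = 1` modulo `x^m - 1`; hence `q₂` is coprime to `x^m - 1`, and so to its divisor `q₁`.
-/

lemma sub_one_dvd_geom_sum_sub_natCast {R : Type*} [CommRing R] (a : R) (s : ℕ) :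
    a - 1 ∣ ∑ i ∈ range s, a ^ i - s := by
  simpa [sum_sub_distrib] using dvd_sum (s := range s) fun i _ => sub_one_dvd_pow_sub_one a i

lemma isCoprime_sub_one_geom_sum {R : Type*} [CommRing R] (a : R) {s : ℕ}
    (hs : IsUnit (s : R)) : IsCoprime (a - 1) (∑ i ∈ range s, a ^ i) := by
  obtain ⟨t, ht⟩ := sub_one_dvd_geom_sum_sub_natCast a s
  rw [sub_eq_iff_eq_add'.mp ht]
  exact (isCoprime_one_right.of_isCoprime_of_dvd_right hs.dvd).add_mul_left_right t

lemma pow_sub_one_div_sub_one {R : Type*} [EuclideanDomain R] {a : R} (ha : a ≠ 1) (s : ℕ) :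
    (a ^ s - 1) / (a - 1) = ∑ i ∈ range s, a ^ i :=
  (EuclideanDomain.eq_div_of_mul_eq_right (sub_ne_zero.mpr ha) (mul_geom_sum a s)).symm

lemma X_pow_ne_one {R : Type*} [Ring R] [Nontrivial R] {m : ℕ} (hm : 0 < m) :
    (X ^ m : R[X]) ≠ 1 :=
  sub_ne_zero.mp (by simpa using X_pow_sub_C_ne_zero (R := R) hm 1)

theorem stmt12_general (n : ℕ) (r : ℕ) (hr : 0 < r)
    (s : ℕ) (hs : Odd s) (hns : 2 * (n - 1) = r * s) :
    IsCoprime ((X ^ (r / 2) - 1 : Polynomial (ZMod 2)) / (X + 1))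
      ((X ^ (n - 1) - 1 : Polynomial (ZMod 2)) / (X ^ (r / 2) - 1)) := by
  obtain ⟨m, rfl⟩ : 2 ∣ r :=
    ((Nat.even_mul.mp (hns ▸ even_two_mul _)).resolve_right (Nat.not_even_iff_odd.mpr hs)).two_dvd
  have hn : n - 1 = m * s := by rw [mul_assoc] at hns; omega
  rw [Nat.mul_div_cancel_left m two_pos, hn, pow_mul,
    pow_sub_one_div_sub_one (X_pow_ne_one (by omega))]
  refine (isCoprime_sub_one_geom_sum _ ?_).of_isCoprime_of_dvd_left
    (EuclideanDomain.div_dvd_of_dvd ?_)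
  · rw [← C_eq_natCast, ZMod.natCast_eq_one_iff_odd.mpr hs, C_1]
    exact isUnit_one
  · simpa [← CharTwo.sub_eq_add] using sub_one_dvd_pow_sub_one (X : (ZMod 2)[X]) m

/-- If `n ≥ 3` is odd, `r ∣ 2n−2` with `(2n−2)/r` odd, and `n−1 = rs/2` with `s` odd,
then `q₁(x) = (x^{r/2} − 1)/(x+1)` and `q₂(x) = (x^{n−1} − 1)/(x^{r/2} − 1)` are
coprime in `𝔽₂[x]`. -/
theorem stmt12 (n : ℕ) (hn : 3 ≤ n) (hno : Odd n) (r : ℕ) (hr : 0 < r)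
    (hdvd : r ∣ 2 * n - 2) (hodd : Odd ((2 * n - 2) / r))
    (s : ℕ) (hs : Odd s) (hns : 2 * (n - 1) = r * s) :
    IsCoprime ((X ^ (r / 2) - 1 : Polynomial (ZMod 2)) / (X + 1))
      ((X ^ (n - 1) - 1 : Polynomial (ZMod 2)) / (X ^ (r / 2) - 1)) :=
  stmt12_general n r hr s hs hns
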